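/- Define ρ = (4/3)^(1/4), b(k) = ((k−1)! ρ)^(1/(k−1)) for k ≥ 2, λ(k) = log(b(k+1)/b(k)), α(2) = 2/ρ^3, α(3) = 6/(ρ^4 b(3) b(5)), α(k) = α(k−1)/(1 + k(λ(k−1) − λ(k))) for k ≥ 4. Then the sequence k·α(k) is strictly increasing for k ≥ 2. -/

import Mathlib

noncomputable def rho : ℝ := (4/3 : ℝ) ^ ((1 : ℝ)/4)

noncomputable def b : ℕ → ℝ
  | 0 => 1
  | 1 => 1
  | (k+2) => (((k+1).factorial : ℝ) * rho) ^ ((1 : ℝ)/(k+1))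

noncomputable def lam (k : ℕ) : ℝ := Real.log (b (k+1) / b k)

noncomputable def alpha : ℕ → ℝ
  | 0 => 1
  | 1 => Real.sqrt (2 / rho ^ 5)
  | 2 => 2 / rho ^ 3
  | 3 => 6 / (rho ^ 4 * b 3 * b 5)
  | (k+4) => alpha (k+3) / (1 + ((k : ℝ) + 4) * (lam (k+3) - lam (k+4)))

/-!
For `k ≥ 3` the recursion gives `(k + 1) α(k + 1) / (k α(k)) = (k + 1) / (k D_k)` with
`D_k = 1 + (k + 1) (λ(k) - λ(k + 1))`, so it suffices that `0 < k D_k < k + 1`. Since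
`log b(k + 1) = log (k! ρ) / k`, the second difference `λ(k) - λ(k + 1)`, multiplied by `k (k² - 1)`,
is an explicit expression in `log k`, `log (k + 1)` and `log (k! ρ)`. The two bounds on `D_k` then
come from `log k! ≤ k log k` and from Stirling's lower bound for `log k!` respectively, together with
`2 / (2k + 1) ≤ log (1 + 1/k) ≤ 1/k`. The case `k = 2` is a numerical check.
-/

open Real
open scoped Nat

lemma one_lt_rho : 1 < rho :=
  one_lt_rpow (by norm_num) (by norm_num)

lemma rho_pos : 0 < rho := one_pos.trans one_lt_rho

lemma rho_pow_four : rho ^ 4 = 4 / 3 := by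
  simpa [rho, one_div] using rpow_inv_natCast_pow (x := 4 / 3) (by norm_num) four_ne_zero

lemma log_rho_pos : 0 < log rho := log_pos one_lt_rho

lemma log_rho_lt_half : log rho < 1 / 2 := by
  have h : 4 * log rho = log (4 / 3) := by
    rw [← rho_pow_four, log_pow]; norm_num
  linarith [log_le_sub_one_of_pos (show (0 : ℝ) < 4 / 3 by norm_num)]

lemma b_pos (k : ℕ) : 0 < b k := by
  match k with
  | 0 | 1 => simp [b]
  | k + 2 => exact rpow_pos_of_pos (by positivity [rho_pos]) _

lemma b_succ_pow {n : ℕ} (hn : n ≠ 0) : b (n + 1) ^ n = n ! * rho := by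
  obtain ⟨k, rfl⟩ := Nat.exists_eq_succ_of_ne_zero hn
  have := rpow_inv_natCast_pow (x := (k + 1)! * rho) (by positivity [rho_pos]) hn
  simpa [b, one_div] using this

lemma log_b_succ {n : ℕ} (hn : n ≠ 0) : log (b (n + 1)) = log (n ! * rho) / n := by
  rw [← b_succ_pow hn, log_pow, mul_div_cancel_left₀ _ (by exact_mod_cast hn)]

lemma log_factorial_succ_mul_rho (n : ℕ) :
    log ((n + 1)! * rho) = log (n ! * rho) + log (n + 1) := by
  rw [Nat.factorial_succ, Nat.cast_mul, mul_assoc, log_mul (by positivity) (by positivity [rho_pos]),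
    add_comm]
  push_cast; rfl

lemma lam_eq (n : ℕ) : lam n = log (b (n + 1)) - log (b n) :=
  log_div (b_pos _).ne' (b_pos _).ne'

lemma lam_sub_lam_succ_mul {n : ℕ} (hn : 2 ≤ n) :
    (lam n - lam (n + 1)) * (n * (n - 1) * (n + 1)) =
      n * (n + 1) * log n - n * (n - 1) * log (n + 1) - 2 * log (n ! * rho) := by
  obtain ⟨m, rfl⟩ : ∃ m, n = m + 1 := ⟨n - 1, by omega⟩
  have hm : (m : ℝ) ≠ 0 := by norm_cast; omega
  rw [lam_eq, lam_eq, log_b_succ (n := m + 2) (by omega), log_b_succ (n := m + 1) (by omega),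
    log_b_succ (n := m) (by omega), log_factorial_succ_mul_rho (m + 1), log_factorial_succ_mul_rho m]
  push_cast
  field_simp
  ring

lemma mul_log_add_one_sub_log_le {x : ℝ} (hx : 0 < x) : x * (log (x + 1) - log x) ≤ 1 := by
  have h := log_le_sub_one_of_pos (show 0 < (x + 1) / x by positivity)
  rw [log_div (by positivity) hx.ne'] at h
  calc x * (log (x + 1) - log x) ≤ x * ((x + 1) / x - 1) := by gcongr
    _ = 1 := by field_simp; ring

lemma two_div_le_log_add_one_sub_log {x : ℝ} (hx : 0 < x) :
    2 / (2 * x + 1) ≤ log (x + 1) - log x := by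
  have h := le_log_one_add_of_nonneg (inv_nonneg.mpr hx.le)
  rw [← log_div (by positivity) hx.ne']
  convert h using 1
  · field_simp; ring
  · congr 1; field_simp

lemma five_halves_lt_log_four_mul_pi : 5 / 2 < log (4 * π) := by
  rw [lt_log_iff_exp_lt (by positivity)]
  refine lt_of_pow_lt_pow_left₀ 2 (by positivity) ?_
  have hexp : exp 1 ^ 5 < 2.7182818286 ^ 5 := by gcongr; exact exp_one_lt_d9
  have hpi : (3.14 : ℝ) ^ 2 < π ^ 2 := by gcongr; exact pi_gt_d2
  calc exp (5 / 2) ^ 2 = exp 1 ^ 5 := by rw [← exp_nat_mul, ← exp_nat_mul]; norm_num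
    _ < (4 * π) ^ 2 := by nlinarith

lemma two_log_factorial_mul_rho_lt {n : ℕ} (hn : 2 ≤ n) :
    2 * log (n ! * rho) < n * (n + 1) * log n - n * (n - 1) * log (n + 1) + n * (n - 1) := by
  have hx : (2 : ℝ) ≤ n := by exact_mod_cast hn
  have hfac : log (n ! : ℝ) ≤ n * log n := by
    rw [← log_pow]
    exact log_le_log (by positivity) (by exact_mod_cast Nat.factorial_le_pow n)
  have hstep := mul_le_mul_of_nonneg_left (mul_log_add_one_sub_log_le (x := n) (by positivity))
    (show (0 : ℝ) ≤ n - 1 by linarith)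
  rw [log_mul (by positivity) rho_pos.ne']
  nlinarith [log_rho_lt_half]

lemma lt_two_log_factorial_mul_rho {n : ℕ} (hn : 2 ≤ n) :
    n * (n + 1) * log n - n * (n - 1) * log (n + 1) - (n - 1) < 2 * log (n ! * rho) := by
  have hx : (2 : ℝ) ≤ n := by exact_mod_cast hn
  have hstirling := Stirling.le_log_factorial_stirling (n := n) (by omega)
  have hstep := mul_le_mul_of_nonneg_left (two_div_le_log_add_one_sub_log (x := n) (by positivity))
    (show (0 : ℝ) ≤ n * (n - 1) by nlinarith)
  have hfrac : (n : ℝ) * (n - 1) * (2 / (2 * n + 1)) = n - 1 - (n - 1) / (2 * n + 1) := by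
    field_simp; ring
  have hfrac_lt : ((n : ℝ) - 1) / (2 * n + 1) < 1 / 2 := by
    rw [div_lt_iff₀ (by positivity)]; linarith
  have hlog : log (4 * π) ≤ log (2 * π) + log n := by
    rw [← log_mul (by positivity) (by positivity)]
    exact log_le_log (by positivity) (by nlinarith [pi_pos])
  rw [log_mul (by positivity) rho_pos.ne']
  -- after Stirling, what is left is `(5n + 1) / (2n + 1) < log (2πn) + 2 log ρ`
  linarith [log_rho_pos, five_halves_lt_log_four_mul_pi]

noncomputable def alphaDenom (k : ℕ) : ℝ := 1 + (k + 1) * (lam k - lam (k + 1))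

lemma alpha_succ {k : ℕ} (hk : 3 ≤ k) : alpha (k + 1) = alpha k / alphaDenom k := by
  obtain ⟨m, rfl⟩ : ∃ m, k = m + 3 := ⟨k - 3, by omega⟩
  simp only [alpha, alphaDenom]
  push_cast
  ring_nf

lemma alphaDenom_pos {n : ℕ} (hn : 2 ≤ n) : 0 < alphaDenom n := by
  have hx : (2 : ℝ) ≤ n := by exact_mod_cast hn
  have hscale : alphaDenom n * (n * (n - 1)) =
      n * (n - 1) + (lam n - lam (n + 1)) * (n * (n - 1) * (n + 1)) := by
    unfold alphaDenom; ring
  have hprod : 0 < alphaDenom n * (n * (n - 1)) := by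
    rw [hscale, lam_sub_lam_succ_mul hn]
    linarith [two_log_factorial_mul_rho_lt hn]
  exact pos_of_mul_pos_left hprod (by nlinarith)

lemma mul_alphaDenom_lt {n : ℕ} (hn : 2 ≤ n) : n * alphaDenom n < n + 1 := by
  have hx : (2 : ℝ) ≤ n := by exact_mod_cast hn
  have hscale : n * alphaDenom n * (n - 1) =
      n * (n - 1) + (lam n - lam (n + 1)) * (n * (n - 1) * (n + 1)) := by
    unfold alphaDenom; ring
  refine lt_of_mul_lt_mul_right (a := (n : ℝ) - 1) ?_ (by linarith)
  rw [hscale, lam_sub_lam_succ_mul hn]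
  linarith [lt_two_log_factorial_mul_rho hn]

lemma alpha_pos {k : ℕ} (hk : 3 ≤ k) : 0 < alpha k := by
  induction k, hk using Nat.le_induction with
  | base => exact div_pos (by norm_num) (by have := b_pos 3; have := b_pos 5; positivity [rho_pos])
  | succ k hk ih => rw [alpha_succ hk]; exact div_pos ih (alphaDenom_pos (by omega))

lemma two_mul_alpha_two_lt : 2 * alpha 2 < 3 * alpha 3 := by
  have hb3 : b 3 ^ 2 = 2 * rho := by simpa using b_succ_pow (n := 2) (by norm_num)
  have hb5 : b 5 ^ 4 = 24 * rho := by simpa [Nat.factorial] using b_succ_pow (n := 4) (by norm_num)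
  have hρ := rho_pos
  have h3 := b_pos 3
  have h5 := b_pos 5
  have hcube : rho ^ 3 < rho ^ 4 := pow_lt_pow_right₀ one_lt_rho (by norm_num)
  have hbound : 2 * rho * b 3 * b 5 < 9 := by
    refine lt_of_pow_lt_pow_left₀ 4 (by norm_num) ?_
    calc (2 * rho * b 3 * b 5) ^ 4 = 16 * rho ^ 4 * (b 3 ^ 2) ^ 2 * b 5 ^ 4 := by ring
      _ = 2048 * rho ^ 3 := by rw [hb3, hb5, rho_pow_four]; ring
      _ < 9 ^ 4 := by rw [rho_pow_four] at hcube; linarith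
  simp only [alpha]
  calc 2 * (2 / rho ^ 3) = 2 * (2 * rho * b 3 * b 5) / (rho ^ 4 * b 3 * b 5) := by
        field_simp
    _ < 2 * 9 / (rho ^ 4 * b 3 * b 5) := by gcongr
    _ = 3 * (6 / (rho ^ 4 * b 3 * b 5)) := by ring

theorem k_alpha_strict_mono (k : ℕ) (hk : 2 ≤ k) :
    (k : ℝ) * alpha k < ((k : ℝ) + 1) * alpha (k+1) := by
  rcases hk.eq_or_lt with rfl | hk
  · norm_num [two_mul_alpha_two_lt]
  have hD := alphaDenom_pos hk.le
  rw [alpha_succ hk, ← mul_div_assoc, lt_div_iff₀ hD]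
  linarith [mul_lt_mul_of_pos_right (mul_alphaDenom_lt hk.le) (alpha_pos hk)]
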